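/- arXiv:2605.23589 — 2 statements merged into one kernel-verified Lean document; each statement's English description precedes it below -/
import Mathlib

section
/- For any consecutive clustering of the horizon, the temporally aggregated GEP model provides a lower bound on the optimal objective function value of the full-scale GEP model: if z* is feasible for the full-scale model and minimizes the full-scale objective J over the full-scale feasible set, and ẑ* is feasible for the aggregated model and minimizes the aggregated objective Ĵ over the aggregated feasible set, then Ĵ(ẑ*) ≤ J(z*). Moreover, for every full-scale feasible z there exists an aggregated feasible ẑ with Ĵ(ẑ) = J(z). -/
open Finset

/-- Data of the full-scale GEP model. -/
structure GEPData (G N : Type) where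
  /-- sampling time Δ (h) -/
  delta : ℝ
  /-- capacity factors F_{g,t} -/
  F : G → ℕ → ℝ
  /-- energy demand D_t -/
  D : ℕ → ℝ
  /-- operational cost of generator g -/
  Cpg : G → ℝ
  /-- charging cost of storage n -/
  Cpc : N → ℝ
  /-- discharging cost of storage n -/
  Cpd : N → ℝ
  /-- cost of non-supplied energy -/
  Cns : ℝ
  /-- investment cost of generator g -/
  Cginv : G → ℝ
  /-- investment cost of storage n -/
  Csinv : N → ℝ
  /-- charging efficiency -/
  etac : N → ℝ
  /-- discharging efficiency -/
  etad : N → ℝ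
  /-- energy-to-power ratio -/
  Tn : N → ℝ
  /-- initial stored energy -/
  E0 : N → ℝ
  /-- minimum generator capacity -/
  Xgl : G → ℝ
  /-- maximum generator capacity -/
  Xgu : G → ℝ
  /-- minimum storage capacity -/
  Xsl : N → ℝ
  /-- maximum storage capacity -/
  Xsu : N → ℝ

/-- Decision variables of the (full-scale or aggregated) GEP model; time-indexed
variables are functions on ℕ, constrained only on the relevant horizon. -/
structure GEPVars (G N : Type) where
  xg : G → ℝ
  xs : N → ℝ
  bg : G → ℝ
  bs : N → ℝ
  pg : G → ℕ → ℝ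
  es : N → ℕ → ℝ
  pc : N → ℕ → ℝ
  pd : N → ℕ → ℝ
  ens : ℕ → ℝ

/-- Feasibility for the full-scale GEP model over horizon {0,…,T−1}. -/
def Feasible {G N : Type} [Fintype G] [Fintype N]
    (d : GEPData G N) (T : ℕ) (z : GEPVars G N) : Prop :=
  (∀ g, z.bg g = 0 ∨ z.bg g = 1) ∧
  (∀ n, z.bs n = 0 ∨ z.bs n = 1) ∧
  (∀ t < T, ∑ g : G, z.pg g t * d.delta
      + ∑ n : N, (z.pd n t - z.pc n t) * d.delta + z.ens t = d.D t) ∧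
  (∀ n, ∀ t, t + 1 < T →
      z.es n (t + 1) = z.es n t
        + (d.etac n * z.pc n t - d.etad n * z.pd n t) * d.delta) ∧
  (∀ n, z.es n 0 = d.E0 n) ∧
  (∀ g, ∀ t < T, 0 ≤ z.pg g t ∧ z.pg g t ≤ d.F g t * z.xg g) ∧
  (∀ n, ∀ t < T, 0 ≤ z.es n t ∧ z.es n t ≤ z.xs n * d.delta) ∧
  (∀ n, ∀ t < T, 0 ≤ z.pc n t ∧ z.pc n t ≤ z.xs n * d.delta / d.Tn n) ∧
  (∀ n, ∀ t < T, 0 ≤ z.pd n t ∧ z.pd n t ≤ z.xs n * d.delta / d.Tn n) ∧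
  (∀ n, z.bs n * d.Xsl n ≤ z.xs n ∧ z.xs n ≤ z.bs n * d.Xsu n) ∧
  (∀ g, z.bg g * d.Xgl g ≤ z.xg g ∧ z.xg g ≤ z.bg g * d.Xgu g) ∧
  (∀ t < T, 0 ≤ z.ens t)

/-- Objective function J of the full-scale GEP model. -/
noncomputable def objJ {G N : Type} [Fintype G] [Fintype N]
    (d : GEPData G N) (T : ℕ) (z : GEPVars G N) : ℝ :=
  ∑ g : G, d.Cginv g * z.xg g + ∑ n : N, d.Csinv n * z.xs n
    + ∑ t ∈ Finset.range T, ∑ g : G, d.Cpg g * z.pg g t * d.delta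
    + ∑ t ∈ Finset.range T,
        (∑ n : N, (d.Cpc n * z.pc n t + d.Cpd n * z.pd n t) * d.delta
          + d.Cns * z.ens t)

/-- A consecutive clustering (partition of {0,…,T−1} into K nonempty intervals of
consecutive indices), encoded by the first indices `start k` of the clusters. -/
structure ConsecClustering (T K : ℕ) where
  start : ℕ → ℕ
  start_zero : start 0 = 0
  start_last : start K = T
  start_lt : ∀ k < K, start k < start (k + 1)

/-- Number of time steps T_k in cluster k. -/
def ConsecClustering.Tk {T K : ℕ} (c : ConsecClustering T K) (k : ℕ) : ℕ :=
  c.start (k + 1) - c.start k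

/-- The set of (consecutive) time steps assigned to cluster k. -/
def ConsecClustering.cluster {T K : ℕ} (c : ConsecClustering T K) (k : ℕ) :
    Finset ℕ :=
  Finset.Ico (c.start k) (c.start (k + 1))

/-- Aggregated capacity factor F̂_{g,k}. -/
noncomputable def Fhat {G N : Type} (d : GEPData G N) {T K : ℕ} (c : ConsecClustering T K)
    (g : G) (k : ℕ) : ℝ :=
  (∑ t ∈ c.cluster k, d.F g t) / (c.Tk k : ℝ)

/-- Aggregated demand D̂_k. -/
noncomputable def Dhat {G N : Type} (d : GEPData G N) {T K : ℕ} (c : ConsecClustering T K)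
    (k : ℕ) : ℝ :=
  (∑ t ∈ c.cluster k, d.D t) / (c.Tk k : ℝ)

/-- Feasibility for the temporally aggregated GEP model over clusters {0,…,K−1}. -/
def AggFeasible {G N : Type} [Fintype G] [Fintype N]
    (d : GEPData G N) {T K : ℕ} (c : ConsecClustering T K) (z : GEPVars G N) :
    Prop :=
  (∀ g, z.bg g = 0 ∨ z.bg g = 1) ∧
  (∀ n, z.bs n = 0 ∨ z.bs n = 1) ∧
  (∀ k < K, ∑ g : G, z.pg g k * d.delta
      + ∑ n : N, (z.pd n k - z.pc n k) * d.delta + z.ens k = Dhat d c k) ∧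
  (∀ n, ∀ k, k + 1 < K →
      z.es n (k + 1) = z.es n k
        + (d.etac n * z.pc n k - d.etad n * z.pd n k) * (c.Tk k : ℝ) * d.delta) ∧
  (∀ n, z.es n 0 = d.E0 n) ∧
  (∀ g, ∀ k < K, 0 ≤ z.pg g k ∧ z.pg g k ≤ Fhat d c g k * z.xg g) ∧
  (∀ n, ∀ k < K, 0 ≤ z.es n k ∧ z.es n k ≤ z.xs n * d.delta) ∧
  (∀ n, ∀ k < K, 0 ≤ z.pc n k ∧ z.pc n k ≤ z.xs n * d.delta / d.Tn n) ∧
  (∀ n, ∀ k < K, 0 ≤ z.pd n k ∧ z.pd n k ≤ z.xs n * d.delta / d.Tn n) ∧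
  (∀ n, z.bs n * d.Xsl n ≤ z.xs n ∧ z.xs n ≤ z.bs n * d.Xsu n) ∧
  (∀ g, z.bg g * d.Xgl g ≤ z.xg g ∧ z.xg g ≤ z.bg g * d.Xgu g) ∧
  (∀ k < K, 0 ≤ z.ens k)

/-- Objective function Ĵ of the temporally aggregated GEP model. -/
noncomputable def objJagg {G N : Type} [Fintype G] [Fintype N]
    (d : GEPData G N) {T K : ℕ} (c : ConsecClustering T K) (z : GEPVars G N) :
    ℝ :=
  ∑ g : G, d.Cginv g * z.xg g + ∑ n : N, d.Csinv n * z.xs n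
    + ∑ k ∈ Finset.range K, (c.Tk k : ℝ) *
        (∑ g : G, d.Cpg g * z.pg g k * d.delta
          + ∑ n : N, (d.Cpc n * z.pc n k + d.Cpd n * z.pd n k) * d.delta
          + d.Cns * z.ens k)

/-- The aggregation ẑ of a full-scale assignment z: investment variables are kept,
time-indexed operational variables are averaged over each cluster, and the stored
energy is sampled at the first index of each cluster. -/
noncomputable def aggregate {G N : Type} {T K : ℕ} (c : ConsecClustering T K)
    (z : GEPVars G N) : GEPVars G N where
  xg := z.xg
  xs := z.xs
  bg := z.bg
  bs := z.bs
  pg := fun g k => (∑ t ∈ c.cluster k, z.pg g t) / (c.Tk k : ℝ)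
  es := fun n k => z.es n (c.start k)
  pc := fun n k => (∑ t ∈ c.cluster k, z.pc n t) / (c.Tk k : ℝ)
  pd := fun n k => (∑ t ∈ c.cluster k, z.pd n t) / (c.Tk k : ℝ)
  ens := fun k => (∑ t ∈ c.cluster k, z.ens t) / (c.Tk k : ℝ)


section AuxLemmas

private lemma chain_mono (s : ℕ → ℕ) (K : ℕ) (h : ∀ k < K, s k ≤ s (k+1)) :
    ∀ j ≤ K, ∀ i ≤ j, s i ≤ s j := by
  intro j hj
  induction j with
  | zero => intro i hi; rw [Nat.le_zero.mp hi]
  | succ j ih =>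
    intro i hi
    rcases Nat.lt_succ_iff_lt_or_eq.mp (Nat.lt_succ_of_le hi) with h'|h'
    · exact le_trans (ih (by omega) i (by omega)) (h j (by omega))
    · rw [h']

private lemma ConsecClustering.mono {T K : ℕ} (c : ConsecClustering T K)
    {i j : ℕ} (hij : i ≤ j) (hjK : j ≤ K) : c.start i ≤ c.start j :=
  chain_mono c.start K (fun k hk => (c.start_lt k hk).le) j hjK i hij

private lemma ConsecClustering.start_le_T {T K : ℕ} (c : ConsecClustering T K)
    {k : ℕ} (hk : k ≤ K) : c.start k ≤ T := by
  have := c.mono hk le_rfl; rwa [c.start_last] at this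

private lemma ConsecClustering.start_lt_T {T K : ℕ} (c : ConsecClustering T K)
    {k : ℕ} (hk : k < K) : c.start k < T :=
  lt_of_lt_of_le (c.start_lt k hk) (c.start_le_T hk)

private lemma ConsecClustering.Tk_pos {T K : ℕ} (c : ConsecClustering T K)
    {k : ℕ} (hk : k < K) : 0 < c.Tk k :=
  Nat.sub_pos_of_lt (c.start_lt k hk)

private lemma ConsecClustering.Tk_ne {T K : ℕ} (c : ConsecClustering T K)
    {k : ℕ} (hk : k < K) : ((c.Tk k : ℝ)) ≠ 0 := by
  exact_mod_cast (c.Tk_pos hk).ne'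

private lemma ConsecClustering.mem_cluster_lt_T {T K : ℕ} (c : ConsecClustering T K)
    {k t : ℕ} (hk : k < K) (ht : t ∈ c.cluster k) : t < T := by
  rw [ConsecClustering.cluster, Finset.mem_Ico] at ht
  exact lt_of_lt_of_le ht.2 (c.start_le_T hk)

private lemma ConsecClustering.card_cluster {T K : ℕ} (c : ConsecClustering T K)
    (k : ℕ) : (c.cluster k).card = c.Tk k := by
  rw [ConsecClustering.cluster, Nat.card_Ico, ConsecClustering.Tk]

private lemma telescope_es (f g : ℕ → ℝ) {a b : ℕ} (hab : a ≤ b)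
    (h : ∀ t, a ≤ t → t < b → f (t+1) = f t + g t) :
    f b = f a + ∑ t ∈ Finset.Ico a b, g t := by
  induction b, hab using Nat.le_induction with
  | base => simp
  | succ b hab ih =>
    rw [h b hab (Nat.lt_succ_self b),
      ih (fun t hat htb => h t hat (htb.trans (Nat.lt_succ_self b))),
      Finset.sum_Ico_succ_top hab]
    ring

private lemma sum_clusters {T K : ℕ} (c : ConsecClustering T K) (f : ℕ → ℝ) :
    ∑ k ∈ Finset.range K, ∑ t ∈ c.cluster k, f t = ∑ t ∈ Finset.range T, f t := by
  have key : ∀ M ≤ K, ∑ k ∈ Finset.range M, ∑ t ∈ c.cluster k, f t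
      = ∑ t ∈ Finset.Ico (c.start 0) (c.start M), f t := by
    intro M hM
    induction M with
    | zero => simp
    | succ M ih =>
      rw [Finset.sum_range_succ, ih (by omega), ConsecClustering.cluster,
        Finset.sum_Ico_consecutive f (c.mono (Nat.zero_le M) (by omega))
          (c.start_lt M (by omega)).le]
  have := key K le_rfl
  rwa [c.start_zero, c.start_last, ← Finset.range_eq_Ico] at this

private lemma avg_mem {s : Finset ℕ} (f : ℕ → ℝ) {B : ℝ} {m : ℝ} (hm : 0 < m)
    (hcard : (s.card : ℝ) = m)
    (h : ∀ t ∈ s, 0 ≤ f t ∧ f t ≤ B) :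
    0 ≤ (∑ t ∈ s, f t) / m ∧ (∑ t ∈ s, f t) / m ≤ B := by
  constructor
  · exact div_nonneg (Finset.sum_nonneg fun t ht => (h t ht).1) hm.le
  · rw [div_le_iff₀ hm]
    calc ∑ t ∈ s, f t ≤ ∑ _t ∈ s, B := Finset.sum_le_sum fun t ht => (h t ht).2
    _ = B * m := by rw [Finset.sum_const, hcard.symm]; push_cast; ring

end AuxLemmas

/-- For any consecutive clustering, the temporally aggregated GEP
model provides a lower bound on the optimal objective value of the full-scale GEP
model: Ĵ(ẑ*) ≤ J(z*) for optimal solutions ẑ* and z* of the aggregated and full-scale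
models. Moreover, for every full-scale feasible z there is an aggregated feasible ẑ
with Ĵ(ẑ) = J(z). -/
theorem aggregated_model_lower_bound
    {G N : Type} [Fintype G] [Fintype N] (d : GEPData G N) (T K : ℕ)
    (hT : 1 ≤ T) (hdelta : 0 < d.delta) (hTn : ∀ n, 0 < d.Tn n)
    (hXg : ∀ g, d.Xgl g ≤ d.Xgu g) (hXs : ∀ n, d.Xsl n ≤ d.Xsu n)
    (c : ConsecClustering T K)
    (zstar : GEPVars G N) (hzstar : Feasible d T zstar)
    (hzopt : ∀ z, Feasible d T z → objJ d T zstar ≤ objJ d T z)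
    (what : GEPVars G N) (hwhat : AggFeasible d c what)
    (hwopt : ∀ w, AggFeasible d c w → objJagg d c what ≤ objJagg d c w) :
    objJagg d c what ≤ objJ d T zstar ∧
      ∀ z, Feasible d T z →
        ∃ w, AggFeasible d c w ∧ objJagg d c w = objJ d T z := by
  -- main construction lemma
  have main : ∀ z, Feasible d T z →
      AggFeasible d c (aggregate c z) ∧ objJagg d c (aggregate c z) = objJ d T z := by
    intro z hz
    obtain ⟨hbg, hbs, hbal, hdyn, hE0, hpg, hes, hpc, hpd, hxs, hxg, hens⟩ := hz
    have hcard : ∀ k, ((c.cluster k).card : ℝ) = (c.Tk k : ℝ) := by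
      intro k; exact_mod_cast congrArg Nat.cast (c.card_cluster k)
    constructor
    · refine ⟨hbg, hbs, ?_, ?_, ?_, ?_, ?_, ?_, ?_, hxs, hxg, ?_⟩
      · -- energy balance
        intro k hk
        have hne := c.Tk_ne hk
        have hsum : ∑ t ∈ c.cluster k, (∑ g : G, z.pg g t * d.delta
            + ∑ n : N, (z.pd n t - z.pc n t) * d.delta + z.ens t)
            = ∑ t ∈ c.cluster k, d.D t :=
          Finset.sum_congr rfl fun t ht => hbal t (c.mem_cluster_lt_T hk ht)
        simp only [aggregate, Dhat]
        rw [Finset.sum_add_distrib, Finset.sum_add_distrib] at hsum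
        have h1 : ∑ g : G, (∑ t ∈ c.cluster k, z.pg g t) / (c.Tk k : ℝ) * d.delta
            = (∑ t ∈ c.cluster k, ∑ g : G, z.pg g t * d.delta) / (c.Tk k : ℝ) := by
          simp only [div_mul_eq_mul_div, Finset.sum_mul, ← Finset.sum_div]
          rw [Finset.sum_comm]
        have h2 : ∑ n : N, ((∑ t ∈ c.cluster k, z.pd n t) / (c.Tk k : ℝ)
              - (∑ t ∈ c.cluster k, z.pc n t) / (c.Tk k : ℝ)) * d.delta
            = (∑ t ∈ c.cluster k, ∑ n : N, (z.pd n t - z.pc n t) * d.delta) / (c.Tk k : ℝ) := by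
          simp only [div_sub_div_same, ← Finset.sum_sub_distrib, div_mul_eq_mul_div,
            Finset.sum_mul, ← Finset.sum_div]
          rw [Finset.sum_comm]
        rw [h1, h2, ← add_div, ← add_div, hsum]
      · -- storage dynamics
        intro n k hk1
        have hkK : k < K := by omega
        have hne := c.Tk_ne hkK
        have htel := telescope_es (z.es n)
          (fun t => (d.etac n * z.pc n t - d.etad n * z.pd n t) * d.delta)
          (c.start_lt k hkK).le
          (fun t hat htb => hdyn n t (lt_of_le_of_lt
            (Nat.succ_le_of_lt htb) (c.start_lt_T hk1)))
        simp only [aggregate, ConsecClustering.cluster] at htel ⊢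
        rw [htel]
        congr 1
        rw [← Finset.sum_mul, Finset.sum_sub_distrib, ← Finset.mul_sum, ← Finset.mul_sum]
        field_simp
      · intro n; simp only [aggregate]; rw [c.start_zero]; exact hE0 n
      · -- generation bounds
        intro g k hk
        have hne := c.Tk_ne hk
        have hTkpos : (0:ℝ) < (c.Tk k : ℝ) := by
          exact_mod_cast c.Tk_pos hk
        simp only [aggregate, Fhat]
        constructor
        · exact div_nonneg (Finset.sum_nonneg fun t ht =>
            (hpg g t (c.mem_cluster_lt_T hk ht)).1) hTkpos.le
        · rw [div_mul_eq_mul_div, div_le_div_iff_of_pos_right hTkpos, Finset.sum_mul]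
          exact Finset.sum_le_sum fun t ht => (hpg g t (c.mem_cluster_lt_T hk ht)).2
      · -- storage energy bounds
        intro n k hk
        exact hes n (c.start k) (c.start_lt_T hk)
      · -- charging bounds
        intro n k hk
        exact avg_mem _ (by exact_mod_cast c.Tk_pos hk) (hcard k)
          (fun t ht => hpc n t (c.mem_cluster_lt_T hk ht))
      · -- discharging bounds
        intro n k hk
        exact avg_mem _ (by exact_mod_cast c.Tk_pos hk) (hcard k)
          (fun t ht => hpd n t (c.mem_cluster_lt_T hk ht))
      · -- nonsupplied energy
        intro k hk
        exact div_nonneg (Finset.sum_nonneg fun t ht =>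
          hens t (c.mem_cluster_lt_T hk ht))
          (by exact_mod_cast (c.Tk_pos hk).le)
    · -- objective equality
      simp only [objJagg, objJ, aggregate]
      have hstep : ∀ k ∈ Finset.range K, (c.Tk k : ℝ) *
          (∑ g : G, d.Cpg g * ((∑ t ∈ c.cluster k, z.pg g t) / (c.Tk k : ℝ)) * d.delta
            + ∑ n : N, (d.Cpc n * ((∑ t ∈ c.cluster k, z.pc n t) / (c.Tk k : ℝ))
                + d.Cpd n * ((∑ t ∈ c.cluster k, z.pd n t) / (c.Tk k : ℝ))) * d.delta
            + d.Cns * ((∑ t ∈ c.cluster k, z.ens t) / (c.Tk k : ℝ)))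
          = ∑ t ∈ c.cluster k, (∑ g : G, d.Cpg g * z.pg g t * d.delta
            + (∑ n : N, (d.Cpc n * z.pc n t + d.Cpd n * z.pd n t) * d.delta
              + d.Cns * z.ens t)) := by
        intro k hk
        have hne := c.Tk_ne (Finset.mem_range.mp hk)
        have hA : ∑ g : G, d.Cpg g * ((∑ t ∈ c.cluster k, z.pg g t) / (c.Tk k : ℝ)) * d.delta
            = (∑ t ∈ c.cluster k, ∑ g : G, d.Cpg g * z.pg g t * d.delta) / (c.Tk k : ℝ) := by
          simp only [mul_div_assoc', div_mul_eq_mul_div, Finset.mul_sum, Finset.sum_mul,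
            ← Finset.sum_div]
          rw [Finset.sum_comm]
        have hB : ∑ n : N, (d.Cpc n * ((∑ t ∈ c.cluster k, z.pc n t) / (c.Tk k : ℝ))
              + d.Cpd n * ((∑ t ∈ c.cluster k, z.pd n t) / (c.Tk k : ℝ))) * d.delta
            = (∑ t ∈ c.cluster k, ∑ n : N, (d.Cpc n * z.pc n t + d.Cpd n * z.pd n t) * d.delta)
              / (c.Tk k : ℝ) := by
          simp only [mul_div_assoc', ← add_div, div_mul_eq_mul_div, Finset.mul_sum,
            ← Finset.sum_add_distrib, Finset.sum_mul, ← Finset.sum_div]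
          rw [Finset.sum_comm]
        have hC : d.Cns * ((∑ t ∈ c.cluster k, z.ens t) / (c.Tk k : ℝ))
            = (∑ t ∈ c.cluster k, d.Cns * z.ens t) / (c.Tk k : ℝ) := by
          rw [mul_div_assoc', Finset.mul_sum]
        rw [hA, hB, hC, ← add_div, ← add_div, mul_div_cancel₀ _ hne]
        simp only [Finset.sum_add_distrib]
        ring
      rw [Finset.sum_congr rfl hstep, sum_clusters c, Finset.sum_add_distrib]
      ring
  refine ⟨?_, fun z hz => ⟨aggregate c z, (main z hz).1, (main z hz).2⟩⟩
  have h := main zstar hzstar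
  calc objJagg d c what ≤ objJagg d c (aggregate c zstar) := hwopt _ h.1
  _ = objJ d T zstar := h.2
end

section
/- Exact temporal aggregation under cluster-constant inputs: consider a consecutive clustering such that F_{g,t} = F̂_{g,k} and D_t = D̂_k for every k and every t ∈ T_k, and such that the last cluster is a singleton (|T_{K−1}| = 1). If z* is an optimal solution of the full-scale GEP model and ẑ* is an optimal solution of the temporally aggregated GEP model, then the optimal objective values coincide: Ĵ(ẑ*) = J(z*). -/
open Finset

/-! Averaging a feasible full-scale schedule over each cluster gives a feasible aggregated
schedule with the same cost, because every constraint and the cost are affine in the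
operational variables and the storage recursion telescopes over a cluster; so Ĵ(ẑ*) ≤ J(z*).
Conversely, an aggregated schedule is spread out over time as a piecewise-constant dispatch
with linearly interpolated storage. Cluster-constant inputs make it meet the full-scale
balance and capacity constraints. Inside a cluster k < K − 1 the storage level is a convex
combination of the aggregated levels at k and k + 1, hence within bounds; the last cluster has
no successor level, which is why it has to be a singleton. This gives J(z*) ≤ Ĵ(ẑ*). -/

open scoped BigOperators

theorem Finset.eq_add_sum_Ico_of_succ_eq {M : Type*} [AddCommGroup M] {e f : ℕ → M} {a b : ℕ}
    (hab : a ≤ b) (h : ∀ t ∈ Ico a b, e (t + 1) = e t + f t) :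
    e b = e a + ∑ t ∈ Ico a b, f t := by
  rw [sum_congr rfl fun t ht => eq_sub_of_add_eq' (h t ht).symm, sum_Ico_sub e hab,
    add_sub_cancel]

namespace ConsecClustering

variable {T K : ℕ} (c : ConsecClustering T K)

theorem strictMonoOn_start : StrictMonoOn c.start (Set.Iic K) :=
  strictMonoOn_Iic_of_lt_succ c.start_lt

theorem start_le_start {k l : ℕ} (hkl : k ≤ l) (hl : l ≤ K) : c.start k ≤ c.start l :=
  c.strictMonoOn_start.monotoneOn (Set.mem_Iic.2 (hkl.trans hl)) (Set.mem_Iic.2 hl) hkl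

theorem start_le {k : ℕ} (hk : k ≤ K) : c.start k ≤ T :=
  (c.start_le_start hk le_rfl).trans_eq c.start_last

theorem card_cluster_s11 (k : ℕ) : #(c.cluster k) = c.Tk k := Nat.card_Ico _ _

theorem cast_Tk {k : ℕ} (hk : k < K) :
    (c.Tk k : ℝ) = c.start (k + 1) - c.start k :=
  Nat.cast_sub (c.start_lt k hk).le

theorem Tk_pos_s11 {k : ℕ} (hk : k < K) : 0 < c.Tk k := Nat.sub_pos_of_lt (c.start_lt k hk)

theorem cluster_nonempty {k : ℕ} (hk : k < K) : (c.cluster k).Nonempty :=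
  nonempty_Ico.2 (c.start_lt k hk)

theorem lt_of_mem_cluster {k t : ℕ} (hk : k < K) (ht : t ∈ c.cluster k) : t < T :=
  (mem_Ico.1 ht).2.trans_le (c.start_le hk)

theorem sum_cluster_eq_mul_expect {k : ℕ} (f : ℕ → ℝ) :
    ∑ t ∈ c.cluster k, f t = c.Tk k * 𝔼 t ∈ c.cluster k, f t := by
  rw [← c.card_cluster_s11, card_mul_expect]

theorem sum_div_Tk_eq_expect (k : ℕ) (f : ℕ → ℝ) :
    (∑ t ∈ c.cluster k, f t) / c.Tk k = 𝔼 t ∈ c.cluster k, f t := by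
  rw [expect_eq_sum_div_card, c.card_cluster_s11]

theorem expect_cluster_bounds {f : ℕ → ℝ} {a b : ℝ} (h : ∀ t < T, a ≤ f t ∧ f t ≤ b) {k : ℕ}
    (hk : k < K) : a ≤ 𝔼 t ∈ c.cluster k, f t ∧ 𝔼 t ∈ c.cluster k, f t ≤ b :=
  ⟨le_expect (c.cluster_nonempty hk) fun t ht => (h t (c.lt_of_mem_cluster hk ht)).1,
    expect_le (c.cluster_nonempty hk) fun t ht => (h t (c.lt_of_mem_cluster hk ht)).2⟩

theorem sum_range_sum_cluster {M : Type*} [AddCommMonoid M] (f : ℕ → M) :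
    ∑ k ∈ range K, ∑ t ∈ c.cluster k, f t = ∑ t ∈ range T, f t := by
  suffices h : ∀ m ≤ K, ∑ k ∈ range m, ∑ t ∈ c.cluster k, f t = ∑ t ∈ range (c.start m), f t by
    rw [h K le_rfl, c.start_last]
  intro m hm
  induction m with
  | zero => simp [c.start_zero]
  | succ m ih =>
    rw [sum_range_succ, ih (by omega), cluster,
      sum_range_add_sum_Ico _ (c.start_lt m (by omega)).le]

def clusterOf (t : ℕ) : ℕ := Nat.findGreatest (fun k => c.start k ≤ t) K

theorem start_clusterOf_le (t : ℕ) : c.start (c.clusterOf t) ≤ t :=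
  Nat.findGreatest_spec (P := fun k => c.start k ≤ t) (Nat.zero_le K) (by simp [c.start_zero])

theorem clusterOf_lt {t : ℕ} (ht : t < T) : c.clusterOf t < K := by
  refine (Nat.findGreatest_le K).lt_of_ne fun h => ?_
  have := c.start_clusterOf_le t
  rw [clusterOf, h, c.start_last] at this
  omega

theorem lt_start_clusterOf_succ {t : ℕ} (ht : t < T) : t < c.start (c.clusterOf t + 1) := by
  by_contra! h
  have := Nat.le_findGreatest (P := fun k => c.start k ≤ t) (c.clusterOf_lt ht) h
  exact Nat.not_succ_le_self _ this

theorem mem_cluster_clusterOf {t : ℕ} (ht : t < T) : t ∈ c.cluster (c.clusterOf t) :=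
  mem_Ico.2 ⟨c.start_clusterOf_le t, c.lt_start_clusterOf_succ ht⟩

theorem clusterOf_eq {k t : ℕ} (hk : k < K) (ht : t ∈ c.cluster k) : c.clusterOf t = k := by
  have htT := c.lt_of_mem_cluster hk ht
  rw [cluster, mem_Ico] at ht
  refine le_antisymm ?_ (Nat.le_findGreatest hk.le ht.1)
  by_contra! h
  have := c.start_le_start (show k + 1 ≤ c.clusterOf t from h) (c.clusterOf_lt htT).le
  have := c.start_clusterOf_le t
  omega

theorem clusterOf_zero : c.clusterOf 0 = 0 :=
  Nat.findGreatest_eq_zero_iff.2 fun k hk hkK => by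
    have := c.strictMonoOn_start (Set.mem_Iic.2 (Nat.zero_le K)) (Set.mem_Iic.2 hkK) hk
    simp only [c.start_zero] at this
    omega

theorem clusterOf_succ {t : ℕ} (ht : t + 1 < T) :
    c.clusterOf (t + 1) = c.clusterOf t ∨
      (t + 1 = c.start (c.clusterOf t + 1) ∧ c.clusterOf t + 1 < K ∧
        c.clusterOf (t + 1) = c.clusterOf t + 1) := by
  have hk := c.clusterOf_lt (by omega : t < T)
  have hs := c.start_clusterOf_le t
  have hlt := c.lt_start_clusterOf_succ (by omega : t < T)
  set k := c.clusterOf t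
  rcases (Nat.succ_le_of_lt hlt).lt_or_eq with h | h
  · exact Or.inl (c.clusterOf_eq hk (mem_Ico.2 ⟨by omega, h⟩))
  · have hk1 : k + 1 < K := by
      by_contra! hK
      have : c.start (k + 1) = T := by rw [show k + 1 = K by omega, c.start_last]
      omega
    exact Or.inr ⟨h, hk1, c.clusterOf_eq hk1 (mem_Ico.2 ⟨h.ge, h.trans_lt (c.start_lt _ hk1)⟩)⟩

theorem sum_range_comp_clusterOf {M : Type*} [AddCommMonoid M] (f : ℕ → M) :
    ∑ t ∈ range T, f (c.clusterOf t) = ∑ k ∈ range K, c.Tk k • f k := by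
  rw [← c.sum_range_sum_cluster]
  refine sum_congr rfl fun k hk => ?_
  rw [sum_congr rfl fun t ht => congrArg f (c.clusterOf_eq (mem_range.1 hk) ht), sum_const,
    c.card_cluster_s11]

end ConsecClustering

section GEP

variable {G N : Type} [Fintype G] [Fintype N] (d : GEPData G N) {T K : ℕ}
  (c : ConsecClustering T K)

def supply (z : GEPVars G N) (t : ℕ) : ℝ :=
  ∑ g : G, z.pg g t * d.delta + ∑ n : N, (z.pd n t - z.pc n t) * d.delta + z.ens t

def investmentCost (z : GEPVars G N) : ℝ :=
  ∑ g : G, d.Cginv g * z.xg g + ∑ n : N, d.Csinv n * z.xs n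

def operatingCost (z : GEPVars G N) (t : ℕ) : ℝ :=
  ∑ g : G, d.Cpg g * z.pg g t * d.delta
    + ∑ n : N, (d.Cpc n * z.pc n t + d.Cpd n * z.pd n t) * d.delta + d.Cns * z.ens t

theorem objJ_eq (z : GEPVars G N) :
    objJ d T z = investmentCost d z + ∑ t ∈ range T, operatingCost d z t := by
  simp only [objJ, investmentCost, operatingCost, sum_add_distrib, add_assoc]

theorem objJagg_eq (w : GEPVars G N) :
    objJagg d c w = investmentCost d w + ∑ k ∈ range K, c.Tk k • operatingCost d w k := by
  simp only [objJagg, investmentCost, operatingCost, nsmul_eq_mul]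

theorem supply_aggregate (z : GEPVars G N) (k : ℕ) :
    supply d (aggregate c z) k = 𝔼 t ∈ c.cluster k, supply d z t := by
  simp only [supply, aggregate, c.sum_div_Tk_eq_expect, expect_add_distrib, expect_sum_comm,
    expect_sub_distrib, ← expect_mul]

theorem operatingCost_aggregate (z : GEPVars G N) (k : ℕ) :
    operatingCost d (aggregate c z) k = 𝔼 t ∈ c.cluster k, operatingCost d z t := by
  simp only [operatingCost, aggregate, c.sum_div_Tk_eq_expect, expect_add_distrib,
    expect_sum_comm, ← expect_mul, ← mul_expect]

theorem objJagg_aggregate (z : GEPVars G N) : objJagg d c (aggregate c z) = objJ d T z := by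
  rw [objJagg_eq, objJ_eq, ← c.sum_range_sum_cluster]
  congr 1
  refine sum_congr rfl fun k _ => ?_
  rw [operatingCost_aggregate, nsmul_eq_mul, c.sum_cluster_eq_mul_expect]

theorem aggFeasible_aggregate {z : GEPVars G N} (hz : Feasible d T z) :
    AggFeasible d c (aggregate c z) := by
  obtain ⟨hbg, hbs, hbal, hdyn, hE0, hpg, hes, hpc, hpd, hxs, hxg, hens⟩ := hz
  refine ⟨hbg, hbs, fun k hk => ?balance, fun n k hk => ?dynamics, fun n => ?initial,
    fun g k hk => ?generation, fun n k hk => hes n _ ((c.start_lt k hk).trans_le (c.start_le hk)),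
    fun n k hk => ?charge, fun n k hk => ?discharge, hxs, hxg, fun k hk => ?nonSupplied⟩
  case balance =>
    calc supply d (aggregate c z) k = 𝔼 t ∈ c.cluster k, supply d z t := supply_aggregate d c z k
      _ = 𝔼 t ∈ c.cluster k, d.D t := expect_congr rfl fun t ht =>
          hbal t (c.lt_of_mem_cluster hk ht)
      _ = Dhat d c k := (c.sum_div_Tk_eq_expect k _).symm
  case dynamics =>
    have hstart : c.start (k + 1) < T :=
      (c.start_lt (k + 1) hk).trans_le (c.start_le hk)
    have htelescope := eq_add_sum_Ico_of_succ_eq (c.start_lt k (by omega)).le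
      fun t ht => hdyn n t (by simp only [mem_Ico] at ht; omega)
    simp only [aggregate, c.sum_div_Tk_eq_expect]
    rw [← ConsecClustering.cluster, c.sum_cluster_eq_mul_expect] at htelescope
    rw [htelescope, ← expect_mul, expect_sub_distrib, ← mul_expect, ← mul_expect]
    ring
  case initial => simpa only [aggregate, c.start_zero] using hE0 n
  case generation =>
    simp only [aggregate, Fhat, c.sum_div_Tk_eq_expect, expect_mul]
    exact ⟨expect_nonneg fun t ht => (hpg g t (c.lt_of_mem_cluster hk ht)).1,
      expect_le_expect fun t ht => (hpg g t (c.lt_of_mem_cluster hk ht)).2⟩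
  case charge =>
    simpa only [aggregate, c.sum_div_Tk_eq_expect] using c.expect_cluster_bounds (hpc n) hk
  case discharge =>
    simpa only [aggregate, c.sum_div_Tk_eq_expect] using c.expect_cluster_bounds (hpd n) hk
  case nonSupplied =>
    simpa only [aggregate, c.sum_div_Tk_eq_expect] using
      expect_nonneg fun t ht => hens t (c.lt_of_mem_cluster hk ht)

def disaggregate (w : GEPVars G N) : GEPVars G N where
  xg := w.xg
  xs := w.xs
  bg := w.bg
  bs := w.bs
  pg := fun g t => w.pg g (c.clusterOf t)
  es := fun n t => w.es n (c.clusterOf t)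
    + (d.etac n * w.pc n (c.clusterOf t) - d.etad n * w.pd n (c.clusterOf t)) * d.delta
      * ((t : ℝ) - c.start (c.clusterOf t))
  pc := fun n t => w.pc n (c.clusterOf t)
  pd := fun n t => w.pd n (c.clusterOf t)
  ens := fun t => w.ens (c.clusterOf t)

theorem objJ_disaggregate (w : GEPVars G N) : objJ d T (disaggregate d c w) = objJagg d c w := by
  rw [objJ_eq, objJagg_eq, ← c.sum_range_comp_clusterOf]
  rfl

section

variable {d c} {w : GEPVars G N} (hw : AggFeasible d c w)
include hw

theorem disaggregate_es_succ (n : N) {t : ℕ} (ht : t + 1 < T) :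
    (disaggregate d c w).es n (t + 1) = (disaggregate d c w).es n t
      + (d.etac n * (disaggregate d c w).pc n t
        - d.etad n * (disaggregate d c w).pd n t) * d.delta := by
  obtain ⟨-, -, -, hdyn, -⟩ := hw
  simp only [disaggregate]
  rcases c.clusterOf_succ ht with hsame | ⟨hstart, hk, hnext⟩
  · rw [hsame]
    push_cast
    ring
  · rw [hnext, hdyn n _ hk, c.cast_Tk (by omega), ← hstart]
    push_cast
    ring

theorem disaggregate_es_bounds (hlast : c.Tk (K - 1) = 1) (n : N) {t : ℕ} (ht : t < T) :
    0 ≤ (disaggregate d c w).es n t ∧ (disaggregate d c w).es n t ≤ w.xs n * d.delta := by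
  obtain ⟨-, -, -, hdyn, -, -, hes, -⟩ := hw
  have hk := c.clusterOf_lt ht
  have hmem := mem_Ico.1 (c.mem_cluster_clusterOf ht)
  simp only [disaggregate]
  set k := c.clusterOf t
  by_cases hk1 : k + 1 < K
  · have hTk : (0 : ℝ) < c.Tk k := Nat.cast_pos.2 (c.Tk_pos_s11 hk)
    have hstart : (c.start k : ℝ) ≤ t := by exact_mod_cast hmem.1
    have hnext : (t : ℝ) < c.start (k + 1) := by exact_mod_cast hmem.2
    have hθ : ((t : ℝ) - c.start k) / c.Tk k ∈ Set.Icc (0 : ℝ) 1 :=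
      ⟨div_nonneg (by linarith) hTk.le, (div_le_one hTk).2 (by rw [c.cast_Tk hk]; linarith)⟩
    have hlevel := (convex_Icc (0 : ℝ) (w.xs n * d.delta)).add_smul_sub_mem
      (Set.mem_Icc.2 (hes n k hk)) (Set.mem_Icc.2 (hes n (k + 1) hk1)) hθ
    rw [hdyn n k hk1, smul_eq_mul] at hlevel
    rw [← Set.mem_Icc]
    convert hlevel using 1
    field_simp
    ring
  · have hsingle : c.Tk k = 1 := (show k = K - 1 by omega) ▸ hlast
    have htk : t = c.start k := by rw [ConsecClustering.Tk] at hsingle; omega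
    simpa only [htk, sub_self, mul_zero, add_zero] using hes n k hk

theorem feasible_disaggregate
    (hF : ∀ g, ∀ k < K, ∀ t ∈ c.cluster k, d.F g t = Fhat d c g k)
    (hD : ∀ k < K, ∀ t ∈ c.cluster k, d.D t = Dhat d c k) (hlast : c.Tk (K - 1) = 1) :
    Feasible d T (disaggregate d c w) := by
  have hdyn := disaggregate_es_succ hw
  have hes := disaggregate_es_bounds hw hlast
  obtain ⟨hbg, hbs, hbal, -, hE0, hpg, -, hpc, hpd, hxs, hxg, hens⟩ := hw
  have hmem {t : ℕ} (ht : t < T) := c.mem_cluster_clusterOf ht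
  have hk {t : ℕ} (ht : t < T) := c.clusterOf_lt ht
  refine ⟨hbg, hbs, fun t ht => ?balance, fun n t ht => hdyn n ht, fun n => ?initial,
    fun g t ht => ?generation, hes, fun n t ht => hpc n _ (hk ht),
    fun n t ht => hpd n _ (hk ht), hxs, hxg, fun t ht => hens _ (hk ht)⟩
  case balance => exact (hbal _ (hk ht)).trans (hD _ (hk ht) t (hmem ht)).symm
  case initial =>
    simpa only [disaggregate, c.clusterOf_zero, c.start_zero, CharP.cast_eq_zero, sub_self,
      mul_zero, add_zero] using hE0 n
  case generation => simpa only [disaggregate, hF g _ (hk ht) t (hmem ht)] using hpg g _ (hk ht)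

end

end GEP

theorem exact_temporal_aggregation_general
    {G N : Type} [Fintype G] [Fintype N] (d : GEPData G N) (T K : ℕ)
    (c : ConsecClustering T K)
    (hF : ∀ g, ∀ k < K, ∀ t ∈ c.cluster k, d.F g t = Fhat d c g k)
    (hD : ∀ k < K, ∀ t ∈ c.cluster k, d.D t = Dhat d c k)
    (hlast : c.Tk (K - 1) = 1)
    (zstar : GEPVars G N) (hzstar : Feasible d T zstar)
    (hzopt : ∀ z, Feasible d T z → objJ d T zstar ≤ objJ d T z)
    (what : GEPVars G N) (hwhat : AggFeasible d c what)
    (hwopt : ∀ w, AggFeasible d c w → objJagg d c what ≤ objJagg d c w) :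
    objJagg d c what = objJ d T zstar := by
  apply le_antisymm
  · calc objJagg d c what ≤ objJagg d c (aggregate c zstar) :=
          hwopt _ (aggFeasible_aggregate d c hzstar)
      _ = objJ d T zstar := objJagg_aggregate d c zstar
  · calc objJ d T zstar ≤ objJ d T (disaggregate d c what) :=
          hzopt _ (feasible_disaggregate hwhat hF hD hlast)
      _ = objJagg d c what := objJ_disaggregate d c what

/-- Exact temporal aggregation under cluster-constant inputs: if the
input time series are constant within each cluster (F_{g,t} = F̂_{g,k} and D_t = D̂_k
on cluster k) and the last cluster is a singleton, then the optimal objective values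
of the full-scale and temporally aggregated GEP models coincide: Ĵ(ẑ*) = J(z*). -/
theorem exact_temporal_aggregation
    {G N : Type} [Fintype G] [Fintype N] (d : GEPData G N) (T K : ℕ)
    (hT : 1 ≤ T) (hK : 1 ≤ K) (hdelta : 0 < d.delta) (hTn : ∀ n, 0 < d.Tn n)
    (hXg : ∀ g, d.Xgl g ≤ d.Xgu g) (hXs : ∀ n, d.Xsl n ≤ d.Xsu n)
    (c : ConsecClustering T K)
    (hF : ∀ g, ∀ k < K, ∀ t ∈ c.cluster k, d.F g t = Fhat d c g k)
    (hD : ∀ k < K, ∀ t ∈ c.cluster k, d.D t = Dhat d c k)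
    (hlast : c.Tk (K - 1) = 1)
    (zstar : GEPVars G N) (hzstar : Feasible d T zstar)
    (hzopt : ∀ z, Feasible d T z → objJ d T zstar ≤ objJ d T z)
    (what : GEPVars G N) (hwhat : AggFeasible d c what)
    (hwopt : ∀ w, AggFeasible d c w → objJagg d c what ≤ objJagg d c w) :
    objJagg d c what = objJ d T zstar :=
  exact_temporal_aggregation_general d T K c hF hD hlast zstar hzstar hzopt what hwhat hwopt
end
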